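/- arXiv:2010.09461 — 8 statements merged into one kernel-verified Lean document; each statement's English description precedes it below -/
import Mathlib

section
/- If a learner h is globally target-cautious (i.e., on every text T, no hypothesis of h on an initial segment of T enumerates a proper superset of the content of T) and h behaviourally correctly learns a class of languages L from text in the Gold-style (full-information) setting, then every language in L is finite. -/
open scoped Classical

/-- `W e` is the `e`-th computably enumerable set (the domain of the `e`-th
partial computable function in the standard numbering). -/
def W (e : ℕ) : Set ℕ :=
  {x | ((Denumerable.ofNat Nat.Partrec.Code e).eval x).Dom}

/-- A text: a total function from ℕ to ℕ ∪ {#}; `none` is the pause symbol `#`. -/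
abbrev Text := ℕ → Option ℕ

/-- The content of a text: all non-pause symbols occurring in it. -/
def content (T : Text) : Set ℕ := {x | ∃ n, T n = some x}

/-- `seg T n` is the initial segment `T[n]` of length `n`. -/
def seg (T : Text) (n : ℕ) : List (Option ℕ) := (List.range n).map T

/-- The content of a finite sequence. -/
def lcontent (σ : List (Option ℕ)) : Set ℕ := {x | some x ∈ σ}

/-- The content of a finite sequence, as a finite set. -/
def fcontent (σ : List (Option ℕ)) : Finset ℕ := (σ.filterMap id).toFinset

/-- `T` is a text of the language `L`. -/
def IsTextOf (T : Text) (L : Set ℕ) : Prop := content T = L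

/-- Gold-style behaviourally correct (Bc) learning of `L` from every text of `L`. -/
def GBc (h : List (Option ℕ) → ℕ) (L : Set ℕ) : Prop :=
  ∀ T : Text, IsTextOf T L → ∃ n0 : ℕ, ∀ n ≥ n0, W (h (seg T n)) = L

/-!
Let `T` be a text of `L` and let `n` be a stage where the Bc-learner already
conjectures `L`. Continuing `T[n]` with pauses only gives a text of the finite set
`content T[n] ⊆ L` on which the learner still conjectures `L` at stage `n`; target-caution
forbids this unless `content T[n] = L`, so `L` is finite.
-/

def GloballyTargetCautious (h : List (Option ℕ) → ℕ) : Prop :=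
  ∀ T : Text, ∀ n : ℕ, ¬ content T ⊂ W (h (seg T n))

namespace Text

noncomputable def ofSet (L : Set ℕ) : Text := fun n => if n ∈ L then some n else none

theorem isTextOf_ofSet (L : Set ℕ) : IsTextOf (ofSet L) L := by
  ext x
  simp [content, ofSet]

def truncate (T : Text) (n : ℕ) : Text := fun m => if m < n then T m else none

variable (T : Text) (n : ℕ)

theorem seg_truncate : seg (T.truncate n) n = seg T n :=
  List.map_congr_left fun _ hm => if_pos (List.mem_range.mp hm)

theorem content_truncate_subset : content (T.truncate n) ⊆ content T := by
  rintro x ⟨m, hm⟩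
  by_cases hlt : m < n
  · exact ⟨m, by simpa [truncate, hlt] using hm⟩
  · simp [truncate, hlt] at hm

theorem content_truncate_finite : (content (T.truncate n)).Finite := by
  refine (((Set.finite_Iio n).image T).preimage (Option.some_injective ℕ).injOn).subset ?_
  rintro x ⟨m, hm⟩
  by_cases hlt : m < n
  · exact ⟨m, hlt, by simpa [truncate, hlt] using hm⟩
  · simp [truncate, hlt] at hm

end Text

theorem GloballyTargetCautious.content_finite {h : List (Option ℕ) → ℕ}
    (hcaut : GloballyTargetCautious h) {T : Text} {n : ℕ}
    (hW : W (h (seg T n)) = content T) : (content T).Finite := by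
  have hsub : content (T.truncate n) ⊆ W (h (seg (T.truncate n) n)) := by
    rw [Text.seg_truncate, hW]
    exact T.content_truncate_subset n
  have heq : content (T.truncate n) = content T := by
    rw [← hW, ← T.seg_truncate n]
    exact hsub.eq_of_not_ssubset (hcaut _ n)
  exact heq ▸ T.content_truncate_finite n

/-- A globally target-cautious Gold-style Bc-learner learns only finite languages. -/
theorem globally_target_cautious_GBc_only_finite
    (h : List (Option ℕ) → ℕ) (𝓛 : Set (Set ℕ))
    (hcaut : ∀ T : Text, ∀ n : ℕ, ¬ content T ⊂ W (h (seg T n)))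
    (hlearn : ∀ L ∈ 𝓛, GBc h L) :
    ∀ L ∈ 𝓛, L.Finite := by
  intro L hL
  have hT := Text.isTextOf_ofSet L
  obtain ⟨n, hn⟩ := hlearn L hL _ hT
  rw [← hT]
  exact GloballyTargetCautious.content_finite hcaut ((hn n le_rfl).trans hT.symm)
end

section
/- Witness-based learning implies target-cautious learning: if a Gold-style learner h is witness-based on every text of a language L that it explanatorily learns, then h is target-cautious on every text of L. That is, for every text T of L and every n, it is not the case that L is a proper subset of W_{h(T[n])}. -/
open scoped Classical

/-- Gold-style explanatory learning of `L` on the text `T`. -/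
def GExOn (h : List (Option ℕ) → ℕ) (T : Text) (L : Set ℕ) : Prop :=
  ∃ n0 : ℕ, (∀ n ≥ n0, h (seg T n) = h (seg T n0)) ∧ W (h (seg T n0)) = L

/-- The learner `h` is witness-based on the text `T`: every mind change is justified
by a new datum that is in the new hypothesis but not in the old one. -/
def WbOn (h : List (Option ℕ) → ℕ) (T : Text) : Prop :=
  ∀ n m : ℕ, n ≤ m → (∃ k, n ≤ k ∧ k ≤ m ∧ h (seg T n) ≠ h (seg T k)) →
    ((lcontent (seg T m) ∩ W (h (seg T m))) \ W (h (seg T n))).Nonempty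

/-
A hypothesis that properly extends L cannot be the final one, so the learner must later change
its mind. Being witness-based, that change is justified by a datum of the text missing from the
old hypothesis; but every datum lies in L, which the old hypothesis contains.
-/

theorem lcontent_seg_subset_content (T : Text) (m : ℕ) : lcontent (seg T m) ⊆ content T := by
  intro x hx
  obtain ⟨i, -, hi⟩ := List.mem_map.mp hx
  exact ⟨i, hi⟩

theorem GExOn.exists_ge_W_eq {h : List (Option ℕ) → ℕ} {T : Text} {L : Set ℕ}
    (hlearn : GExOn h T L) (n : ℕ) : ∃ m ≥ n, W (h (seg T m)) = L := by
  obtain ⟨n0, hconv, hW⟩ := hlearn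
  exact ⟨max n n0, le_max_left n n0, by rw [hconv _ (le_max_right n n0), hW]⟩

theorem WbOn.not_content_subset_of_ne {h : List (Option ℕ) → ℕ} {T : Text} (hwb : WbOn h T)
    {n m : ℕ} (hnm : n ≤ m) (hne : h (seg T n) ≠ h (seg T m)) :
    ¬ content T ⊆ W (h (seg T n)) := by
  intro hsub
  obtain ⟨x, ⟨hx, -⟩, hxn⟩ := hwb n m hnm ⟨m, hnm, le_rfl, hne⟩
  exact hxn (hsub (lcontent_seg_subset_content T m hx))

/-- Witness-based Ex-learning implies target-cautiousness on every text of the language. -/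
theorem witness_based_implies_target_cautious
    (h : List (Option ℕ) → ℕ) (L : Set ℕ)
    (hlearn : ∀ T : Text, IsTextOf T L → GExOn h T L)
    (hwb : ∀ T : Text, IsTextOf T L → WbOn h T) :
    ∀ T : Text, IsTextOf T L → ∀ n : ℕ, ¬ L ⊂ W (h (seg T n)) := by
  intro T hT n hsub
  obtain ⟨m, hnm, hWm⟩ := (hlearn T hT).exists_ge_W_eq n
  have hne : h (seg T n) ≠ h (seg T m) := fun he => hsub.ne' (by rw [he, hWm])
  exact (hwb T hT).not_content_subset_of_ne hnm hne (hT ▸ hsub.subset)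
end

section
/- Syntactic decisiveness normal form: for any Gold-style learner h explanatorily learning a class L of languages while obeying a pseudo-semantic restriction, there exists a learner h' that explanatorily learns L and is syntactically decisive on all texts of languages in L, i.e., h' never returns to a syntactically abandoned hypothesis: for all sequences sigma1 subseteq sigma2 subseteq sigma3 (extension of finite sequences), if h'(sigma1) = h'(sigma3) then h'(sigma1) = h'(sigma2). Moreover h' makes a mind change only when h makes one. -/
open scoped Classical

/-- Gold-style explanatory learning of `L`. -/
def GEx (h : List (Option ℕ) → ℕ) (L : Set ℕ) : Prop :=
  ∀ T : Text, IsTextOf T L → ∃ n0 : ℕ,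
    (∀ n ≥ n0, h (seg T n) = h (seg T n0)) ∧ W (h (seg T n0)) = L

/-- A restriction on (learning sequence, text) pairs is pseudo-semantic if it is
preserved under replacing hypotheses by semantically equivalent ones without
introducing new syntactic mind changes. -/
def PseudoSemantic (δ : (ℕ → ℕ) → Text → Prop) : Prop :=
  ∀ (p p' : ℕ → ℕ) (T : Text), δ p T → (∀ n, W (p' n) = W (p n)) →
    (∀ n, p' (n + 1) ≠ p' n → p (n + 1) ≠ p n) → δ p' T

/-! Tag every hypothesis of `h` with the number of mind changes `h` has made so far, by padding.
The tagged hypotheses are semantically those of `h`, the tag changes only when `h` changes its mind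
and stabilises once `h` converges, and since the tag never decreases, a hypothesis once abandoned
can never recur. -/

open Nat.Partrec (Code)

/-- On input `x` this code runs `e` on `x`, ignoring `k`; yet `e` and `k` can be read back from
the index. -/
def pad (e k : ℕ) : ℕ :=
  Encodable.encode (Code.curry ((Denumerable.ofNat Code e).comp Code.right) k)

theorem W_pad (e k : ℕ) : W (pad e k) = W e := by
  ext x
  simp only [W, pad, Denumerable.ofNat_encode, Code.eval_curry, Code.eval, PFun.coe_val,
    Nat.unpair_pair, Set.mem_ofPred_eq]
  exact Iff.of_eq (congrArg Part.Dom (Part.bind_some x _))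

theorem pad_injective2 : Function.Injective2 pad := by
  intro e e' k k' hpad
  obtain ⟨hcode, rfl⟩ := Code.curry_inj (Encodable.encode_injective hpad)
  exact ⟨by simpa using congrArg Encodable.encode (Code.comp.inj hcode).1, rfl⟩

theorem computable₂_pad : Computable₂ pad := by
  have hcode : Primrec₂ fun e k => Code.curry ((Denumerable.ofNat Code e).comp Code.right) k :=
    Code.primrec₂_curry.comp
      (Code.primrec₂_comp.comp ((Primrec.ofNat Code).comp Primrec.fst) (Primrec.const Code.right))
      Primrec.snd
  exact (Primrec.encode.comp₂ hcode).to_comp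

section changeCount

variable {α : Type*} [DecidableEq α] (f : ℕ → α)

def changeCount : ℕ → ℕ
  | 0 => 0
  | n + 1 => changeCount n + if f (n + 1) = f n then 0 else 1

theorem changeCount_succ_eq_iff (n : ℕ) :
    changeCount f (n + 1) = changeCount f n ↔ f (n + 1) = f n := by
  by_cases hn : f (n + 1) = f n <;> simp [changeCount, hn]

theorem changeCount_mono : Monotone (changeCount f) :=
  monotone_nat_of_le_succ fun n => by simp only [changeCount]; omega

theorem changeCount_congr {g : ℕ → α} {n : ℕ} (hfg : ∀ k ≤ n, f k = g k) :
    changeCount f n = changeCount g n := by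
  induction n with
  | zero => rfl
  | succ n ih =>
    simp only [changeCount, hfg n (by omega), hfg (n + 1) le_rfl,
      ih fun k hk => hfg k (by omega)]

theorem changeCount_eq_of_forall_ge_eq {n₀ : ℕ} (hf : ∀ n ≥ n₀, f n = f n₀) :
    ∀ n ≥ n₀, changeCount f n = changeCount f n₀ := by
  refine Nat.le_induction rfl fun n hn ih => ?_
  rw [(changeCount_succ_eq_iff f n).2 ((hf (n + 1) (by omega)).trans (hf n hn).symm), ih]

theorem eq_of_changeCount_eq {n₁ n₂ n₃ : ℕ} (h₁₂ : n₁ ≤ n₂) (h₂₃ : n₂ ≤ n₃)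
    (hc : changeCount f n₃ = changeCount f n₁) :
    f n₂ = f n₁ ∧ changeCount f n₂ = changeCount f n₁ := by
  have between : ∀ n, n₁ ≤ n → n ≤ n₃ → changeCount f n = changeCount f n₁ := fun n h₁ h₃ =>
    le_antisymm (hc ▸ changeCount_mono f h₃) (changeCount_mono f h₁)
  refine ⟨?_, between n₂ h₁₂ h₂₃⟩
  induction n₂, h₁₂ using Nat.le_induction with
  | base => rfl
  | succ n hn ih =>
    have hstep := (changeCount_succ_eq_iff f n).1
      ((between (n + 1) (by omega) h₂₃).trans (between n hn (by omega)).symm)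
    rw [hstep, ih (by omega)]

end changeCount

def mindChanges {β α : Type*} [DecidableEq α] (h : List β → α) (σ : List β) : ℕ :=
  changeCount (fun i => h (σ.take i)) σ.length

theorem take_seg (T : Text) {i n : ℕ} (hin : i ≤ n) : (seg T n).take i = seg T i := by
  simp [seg, ← List.map_take, List.take_range, hin]

theorem mindChanges_seg {α : Type*} [DecidableEq α] (h : List (Option ℕ) → α) (T : Text) (n : ℕ) :
    mindChanges h (seg T n) = changeCount (fun i => h (seg T i)) n := by
  rw [mindChanges, show (seg T n).length = n by simp [seg]]
  exact changeCount_congr _ fun i hi => by rw [take_seg T hi]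

theorem Computable.mindChanges {β α : Type*} [Primcodable β] [Primcodable α] [DecidableEq α]
    {h : List β → α} (hh : Computable h) : Computable (mindChanges h) := by
  have hstep : Computable₂ fun (σ : List β) (p : ℕ × ℕ) =>
      p.2 + bif decide (h (σ.take (p.1 + 1)) = h (σ.take p.1)) then 0 else 1 := by
    have hprefix {i : List β × (ℕ × ℕ) → ℕ} (hi : Computable i) :
        Computable fun x : List β × (ℕ × ℕ) => h (x.1.take (i x)) :=
      hh.comp (Primrec.list_take.to_comp.comp hi Computable.fst)
    have hsame := Primrec.eq.decide.to_comp.comp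
      (hprefix (Primrec.succ.to_comp.comp (Computable.fst.comp Computable.snd)))
      (hprefix (Computable.fst.comp Computable.snd))
    exact Primrec.nat_add.to_comp.comp (Computable.snd.comp Computable.snd)
      (Computable.cond hsame (Computable.const 0) (Computable.const 1))
  refine (Computable.nat_rec Computable.list_length (Computable.const 0) hstep).of_eq fun σ => ?_
  simp only [_root_.mindChanges, Bool.cond_decide]
  induction σ.length with
  | zero => rfl
  | succ n ih => simp only [changeCount, ← ih]

def padMindChanges {β : Type*} (h : List β → ℕ) (σ : List β) : ℕ :=
  pad (h σ) (mindChanges h σ)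

section Text

variable (h : List (Option ℕ) → ℕ) (T : Text)

theorem padMindChanges_seg_eq_iff (m n : ℕ) :
    padMindChanges h (seg T m) = padMindChanges h (seg T n) ↔
      h (seg T m) = h (seg T n) ∧
        changeCount (fun i => h (seg T i)) m = changeCount (fun i => h (seg T i)) n := by
  simp only [padMindChanges, mindChanges_seg]
  exact ⟨fun hpad => pad_injective2 hpad, fun ⟨he, hc⟩ => by rw [he, hc]⟩

theorem padMindChanges_seg_eq_of_le_of_le {n₁ n₂ n₃ : ℕ} (h₁₂ : n₁ ≤ n₂) (h₂₃ : n₂ ≤ n₃)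
    (heq : padMindChanges h (seg T n₁) = padMindChanges h (seg T n₃)) :
    padMindChanges h (seg T n₁) = padMindChanges h (seg T n₂) := by
  obtain ⟨-, hc⟩ := (padMindChanges_seg_eq_iff h T n₁ n₃).1 heq
  obtain ⟨he, hc'⟩ := eq_of_changeCount_eq _ h₁₂ h₂₃ hc.symm
  exact (padMindChanges_seg_eq_iff h T n₁ n₂).2 ⟨he.symm, hc'.symm⟩

theorem padMindChanges_seg_succ_eq (n : ℕ) (he : h (seg T (n + 1)) = h (seg T n)) :
    padMindChanges h (seg T (n + 1)) = padMindChanges h (seg T n) :=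
  (padMindChanges_seg_eq_iff h T _ _).2 ⟨he, (changeCount_succ_eq_iff _ n).2 he⟩

end Text

theorem GEx.padMindChanges {h : List (Option ℕ) → ℕ} {L : Set ℕ} (hL : GEx h L) :
    GEx (padMindChanges h) L := by
  intro T hT
  obtain ⟨n₀, hconv, hW⟩ := hL T hT
  refine ⟨n₀, fun n hn => ?_, by rw [_root_.padMindChanges, W_pad, hW]⟩
  exact (padMindChanges_seg_eq_iff h T n n₀).2
    ⟨hconv n hn, changeCount_eq_of_forall_ge_eq _ hconv n hn⟩

theorem syntactically_decisive_normal_form_general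
    (h : List (Option ℕ) → ℕ) (hcomp : Computable h) (𝓛 : Set (Set ℕ))
    (hlearn : ∀ L ∈ 𝓛, GEx h L) :
    ∃ h' : List (Option ℕ) → ℕ, Computable h' ∧
      (∀ L ∈ 𝓛, GEx h' L) ∧
      (∀ L ∈ 𝓛, ∀ T : Text, IsTextOf T L → ∀ n1 n2 n3 : ℕ, n1 ≤ n2 → n2 ≤ n3 →
        h' (seg T n1) = h' (seg T n3) → h' (seg T n1) = h' (seg T n2)) ∧
      (∀ T : Text, ∀ n : ℕ, h' (seg T (n + 1)) ≠ h' (seg T n) →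
        h (seg T (n + 1)) ≠ h (seg T n)) :=
  ⟨padMindChanges h, computable₂_pad.comp hcomp hcomp.mindChanges,
    fun L hL => (hlearn L hL).padMindChanges,
    fun _ _ T _ _ _ _ h₁₂ h₂₃ => padMindChanges_seg_eq_of_le_of_le h T h₁₂ h₂₃,
    fun T n hne he => hne (padMindChanges_seg_succ_eq h T n he)⟩

/-- Syntactic decisiveness normal form: a Gold-style Ex-learner obeying a
pseudo-semantic restriction can be replaced by one that never returns to a
syntactically abandoned hypothesis on texts of learned languages, making mind
changes only where the original learner does. -/
theorem syntactically_decisive_normal_form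
    (δ : (ℕ → ℕ) → Text → Prop) (hδ : PseudoSemantic δ)
    (h : List (Option ℕ) → ℕ) (hcomp : Computable h) (𝓛 : Set (Set ℕ))
    (hlearn : ∀ L ∈ 𝓛, GEx h L)
    (hrestr : ∀ L ∈ 𝓛, ∀ T : Text, IsTextOf T L → δ (fun n => h (seg T n)) T) :
    ∃ h' : List (Option ℕ) → ℕ, Computable h' ∧
      (∀ L ∈ 𝓛, GEx h' L) ∧
      (∀ L ∈ 𝓛, ∀ T : Text, IsTextOf T L → ∀ n1 n2 n3 : ℕ, n1 ≤ n2 → n2 ≤ n3 →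
        h' (seg T n1) = h' (seg T n3) → h' (seg T n1) = h' (seg T n2)) ∧
      (∀ T : Text, ∀ n : ℕ, h' (seg T (n + 1)) ≠ h' (seg T n) →
        h (seg T (n + 1)) ≠ h (seg T n)) :=
  syntactically_decisive_normal_form_general h hcomp 𝓛 hlearn
end

section
/- Strongly locking normal form for partially set-driven learners: if h is a partially set-driven learner that target-cautiously Ex-learns a class L, then the learner h_hat defined by h_hat(D, t) = h(D, 2t) also target-cautiously Ex-learns L, and h_hat is strongly locking: for every L in L and every text T of L there exists n0 such that (content(T[n0]), n0) is a locking information for h_hat on L. -/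
open scoped Classical

/-- Reachability order on partially set-driven information: `(D', t')` is reachable
from `(D, t)` by extending the underlying sequence. -/
def PsdLe (D : Finset ℕ) (t : ℕ) (D' : Finset ℕ) (t' : ℕ) : Prop :=
  D ⊆ D' ∧ t ≤ t' ∧ D'.card - D.card ≤ t' - t

/-- `(D, t)` is a locking information for the partially set-driven learner `h` on `L`. -/
def LockingInfo (h : Finset ℕ → ℕ → ℕ) (L : Set ℕ) (D : Finset ℕ) (t : ℕ) : Prop :=
  ↑D ⊆ L ∧ ∀ (D' : Finset ℕ) (t' : ℕ), PsdLe D t D' t' → ↑D' ⊆ L →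
    h D' t' = h D t ∧ W (h D' t') = L

/-- Partially set-driven explanatory learning of `L`. -/
def PsdEx (h : Finset ℕ → ℕ → ℕ) (L : Set ℕ) : Prop :=
  ∀ T : Text, IsTextOf T L → ∃ n0 : ℕ,
    (∀ n ≥ n0, h (fcontent (seg T n)) n = h (fcontent (seg T n0)) n0) ∧
    W (h (fcontent (seg T n0)) n0) = L

/-- `h` is target-cautious on every text of `L` (as a partially set-driven learner). -/
def PsdCautTar (h : Finset ℕ → ℕ → ℕ) (L : Set ℕ) : Prop :=
  ∀ T : Text, IsTextOf T L → ∀ n : ℕ, ¬ L ⊂ W (h (fcontent (seg T n)) n)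


/-!
Let `(D, t)` be a locking information for `h` on `L` and `ĥ (D, t) = h (D, 2t)`. Along any text
of `L`, pick a stage `n₀ ≥ t` by which all of `D` has appeared. If `(E', s')` is reachable from
`(content(T[n₀]), n₀)`, then `|E'| ≤ s'` and `t ≤ s'`, so `|E'| - |D| ≤ s' ≤ 2s' - t`:
doubling the time leaves room to reach `(E', 2s')` from `(D, t)`, so `ĥ` is locked at stage
`n₀` on every text. Target-cautiousness transfers because `ĥ` at stage `n` on `T` is `h` at stage `2n` on the
text obtained from `T` by inserting a pause after every element.
-/

lemma mem_fcontent_seg {T : Text} {n x : ℕ} :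
    x ∈ fcontent (seg T n) ↔ ∃ m < n, T m = some x := by
  simp [fcontent, seg]

lemma card_fcontent_le_length (σ : List (Option ℕ)) : (fcontent σ).card ≤ σ.length :=
  (List.toFinset_card_le _).trans (List.length_filterMap_le _ _)

lemma card_fcontent_seg_le (T : Text) (n : ℕ) : (fcontent (seg T n)).card ≤ n := by
  simpa [seg] using card_fcontent_le_length (seg T n)

lemma fcontent_seg_mono {T : Text} {n n' : ℕ} (hn : n ≤ n') :
    fcontent (seg T n) ⊆ fcontent (seg T n') := by
  intro x hx
  rw [mem_fcontent_seg] at hx ⊢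
  obtain ⟨m, hm, hx⟩ := hx
  exact ⟨m, hm.trans_le hn, hx⟩

lemma card_fcontent_seg_le_add {T : Text} {n n' : ℕ} (hn : n ≤ n') :
    (fcontent (seg T n')).card ≤ (fcontent (seg T n)).card + (n' - n) := by
  have hsplit : seg T n' = seg T n ++ (List.range (n' - n)).map (fun i => T (n + i)) := by
    rw [seg, seg, show n' = n + (n' - n) by omega, List.range_add, List.map_append,
      List.map_map]
    simp
  rw [hsplit, fcontent, List.filterMap_append, List.toFinset_append]
  refine (Finset.card_union_le _ _).trans (Nat.add_le_add_left ?_ _)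
  simpa [fcontent] using
    card_fcontent_le_length ((List.range (n' - n)).map (fun i => T (n + i)))

lemma psdLe_fcontent_seg {T : Text} {n n' : ℕ} (hn : n ≤ n') :
    PsdLe (fcontent (seg T n)) n (fcontent (seg T n')) n' :=
  ⟨fcontent_seg_mono hn, hn, by have := card_fcontent_seg_le_add (T := T) hn; omega⟩

lemma psdLe_refl (D : Finset ℕ) (t : ℕ) : PsdLe D t D t :=
  ⟨subset_rfl, le_rfl, by simp⟩

lemma coe_fcontent_seg_subset {T : Text} {L : Set ℕ} (hT : IsTextOf T L) (n : ℕ) :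
    ↑(fcontent (seg T n)) ⊆ L := by
  intro x hx
  obtain ⟨m, -, hm⟩ := mem_fcontent_seg.mp hx
  exact hT ▸ ⟨m, hm⟩

lemma exists_subset_fcontent_seg {T : Text} {D : Finset ℕ} (hD : ↑D ⊆ content T) :
    ∃ N, D ⊆ fcontent (seg T N) := by
  induction D using Finset.induction_on with
  | empty => exact ⟨0, Finset.empty_subset _⟩
  | insert a D _ ih =>
    rw [Finset.coe_insert, Set.insert_subset_iff] at hD
    obtain ⟨N, hN⟩ := ih hD.2
    obtain ⟨m, hm⟩ := hD.1
    refine ⟨max N (m + 1), Finset.insert_subset ?_ ?_⟩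
    · exact mem_fcontent_seg.mpr ⟨m, by omega, hm⟩
    · exact hN.trans (fcontent_seg_mono (le_max_left _ _))

lemma PsdLe.double_time {D E E' : Finset ℕ} {t n s' : ℕ} (hDE : D ⊆ E) (ht : t ≤ n)
    (hE : E.card ≤ n) (h : PsdLe E n E' s') : PsdLe D t E' (2 * s') := by
  obtain ⟨hsub, hle, hcard⟩ := h
  refine ⟨hDE.trans hsub, by omega, ?_⟩
  have : E'.card ≤ s' := by omega
  omega

lemma LockingInfo.double_time {h : Finset ℕ → ℕ → ℕ} {L : Set ℕ} {D E : Finset ℕ}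
    {t n : ℕ} (hlock : LockingInfo h L D t) (hDE : D ⊆ E) (hEL : ↑E ⊆ L) (ht : t ≤ n)
    (hE : E.card ≤ n) : LockingInfo (fun D t => h D (2 * t)) L E n := by
  have locked : ∀ E' s', PsdLe E n E' s' → ↑E' ⊆ L →
      h E' (2 * s') = h D t ∧ W (h E' (2 * s')) = L :=
    fun E' s' hle hE'L => hlock.2 E' (2 * s') (hle.double_time hDE ht hE) hE'L
  refine ⟨hEL, fun E' s' hle hE'L => ⟨?_, (locked E' s' hle hE'L).2⟩⟩
  exact (locked E' s' hle hE'L).1.trans (locked E n (psdLe_refl E n) hEL).1.symm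

lemma LockingInfo.exists_seg_lockingInfo_double_time {h : Finset ℕ → ℕ → ℕ} {L : Set ℕ}
    {D : Finset ℕ} {t : ℕ} (hlock : LockingInfo h L D t) {T : Text} (hT : IsTextOf T L) :
    ∃ n0, LockingInfo (fun D t => h D (2 * t)) L (fcontent (seg T n0)) n0 := by
  obtain ⟨N, hN⟩ := exists_subset_fcontent_seg (hT ▸ hlock.1 : ↑D ⊆ content T)
  exact ⟨max N t, hlock.double_time (hN.trans (fcontent_seg_mono (le_max_left _ _)))
    (coe_fcontent_seg_subset hT _) (le_max_right _ _) (card_fcontent_seg_le T _)⟩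

lemma psdEx_of_lockingInfo {g : Finset ℕ → ℕ → ℕ} {L : Set ℕ}
    (hlock : ∀ T : Text, IsTextOf T L → ∃ n0, LockingInfo g L (fcontent (seg T n0)) n0) :
    PsdEx g L := by
  intro T hT
  obtain ⟨n0, -, hn0⟩ := hlock T hT
  refine ⟨n0, fun n hn => ?_, ?_⟩
  · exact (hn0 _ n (psdLe_fcontent_seg hn) (coe_fcontent_seg_subset hT n)).1
  · exact (hn0 _ n0 (psdLe_refl _ _) (coe_fcontent_seg_subset hT n0)).2

def dilate (T : Text) : Text := fun i => if i % 2 = 0 then T (i / 2) else none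

lemma dilate_eq_some {T : Text} {i x : ℕ} :
    dilate T i = some x ↔ i % 2 = 0 ∧ T (i / 2) = some x := by
  unfold dilate
  split_ifs <;> simp [*]

lemma content_dilate (T : Text) : content (dilate T) = content T := by
  ext x
  simp only [content, Set.mem_ofPred_eq, dilate_eq_some]
  constructor
  · rintro ⟨i, -, hi⟩
    exact ⟨i / 2, hi⟩
  · rintro ⟨m, hm⟩
    exact ⟨2 * m, by omega, by simpa using hm⟩

lemma fcontent_seg_dilate (T : Text) (n : ℕ) :
    fcontent (seg (dilate T) (2 * n)) = fcontent (seg T n) := by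
  ext x
  simp only [mem_fcontent_seg, dilate_eq_some]
  constructor
  · rintro ⟨i, hi, -, hx⟩
    exact ⟨i / 2, by omega, hx⟩
  · rintro ⟨m, hm, hx⟩
    exact ⟨2 * m, by omega, by omega, by simpa using hx⟩

lemma PsdCautTar.double_time {h : Finset ℕ → ℕ → ℕ} {L : Set ℕ}
    (hcaut : PsdCautTar h L) :
    PsdCautTar (fun D t => h D (2 * t)) L := by
  intro T hT n
  have hT' : IsTextOf (dilate T) L := (content_dilate T).trans hT
  simpa only [fcontent_seg_dilate] using hcaut (dilate T) hT' (2 * n)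

/-- Strongly locking normal form: `h_hat (D, t) = h (D, 2t)` target-cautiously
Ex-learns every language `h` does, and is strongly locking. -/
theorem strongly_locking_normal_form_psd
    (h : Finset ℕ → ℕ → ℕ) (𝓛 : Set (Set ℕ))
    (hlearn : ∀ L ∈ 𝓛, PsdEx h L ∧ PsdCautTar h L)
    (hlock : ∀ L ∈ 𝓛, ∃ (D : Finset ℕ) (t : ℕ), LockingInfo h L D t) :
    ∀ L ∈ 𝓛, PsdEx (fun D t => h D (2 * t)) L ∧ PsdCautTar (fun D t => h D (2 * t)) L ∧
      ∀ T : Text, IsTextOf T L →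
        ∃ n0 : ℕ, LockingInfo (fun D t => h D (2 * t)) L (fcontent (seg T n0)) n0 := by
  intro L hL
  obtain ⟨D, t, hDt⟩ := hlock L hL
  have strongly_locking := fun T (hT : IsTextOf T L) => hDt.exists_seg_lockingInfo_double_time hT
  exact ⟨psdEx_of_lockingInfo strongly_locking, (hlearn L hL).2.double_time, strongly_locking⟩
end

section
/- For consistent learning sequences, semantic witness-basedness and semantic conservativeness coincide: if p is a learning sequence on text T with content(T[n]) subseteq W_{p(n)} for all n, then p is semantically witness-based on T if and only if p is semantically conservative on T. -/
open scoped Classical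

/-- A hypothesis sequence `p` is semantically witness-based on the text `T`. -/
def SemWbSeq (p : ℕ → ℕ) (T : Text) : Prop :=
  ∀ n m : ℕ, n ≤ m → (∃ k, n ≤ k ∧ k ≤ m ∧ W (p n) ≠ W (p k)) →
    ((lcontent (seg T m) ∩ W (p m)) \ W (p n)).Nonempty

/-- A hypothesis sequence `p` is semantically conservative on the text `T`. -/
def SemConvSeq (p : ℕ → ℕ) (T : Text) : Prop :=
  ∀ n m : ℕ, n < m → lcontent (seg T m) ⊆ W (p n) → W (p n) = W (p m)

theorem lcontent_mono {σ τ : List (Option ℕ)} (h : σ ⊆ τ) : lcontent σ ⊆ lcontent τ :=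
  fun _ hx => h hx

theorem lcontent_seg_mono (T : Text) : Monotone fun n => lcontent (seg T n) :=
  fun _ _ hkm => lcontent_mono (List.map_subset T (List.range_subset.mpr hkm))

theorem SemWbSeq.semConvSeq {p : ℕ → ℕ} {T : Text} (hwb : SemWbSeq p T) : SemConvSeq p T := by
  intro n m hnm hsub
  by_contra hne
  obtain ⟨x, hx, hxn⟩ := hwb n m hnm.le ⟨m, hnm.le, le_rfl, hne⟩
  exact hxn (hsub hx.1)

theorem SemConvSeq.semWbSeq {p : ℕ → ℕ} {T : Text}
    (hcons : ∀ n : ℕ, lcontent (seg T n) ⊆ W (p n)) (hconv : SemConvSeq p T) :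
    SemWbSeq p T := by
  rintro n m - ⟨k, hnk, hkm, hne⟩
  by_contra hnone
  have hsub : lcontent (seg T m) ⊆ W (p n) := fun x hx => by
    by_contra hxn
    exact hnone ⟨x, ⟨hx, hcons m hx⟩, hxn⟩
  obtain rfl | hlt := hnk.eq_or_lt
  · exact hne rfl
  · exact hne (hconv n k hlt ((lcontent_seg_mono T hkm).trans hsub))

/-- For consistent learning sequences, semantic witness-basedness and semantic
conservativeness coincide. -/
theorem consistent_semWb_iff_semConv (p : ℕ → ℕ) (T : Text)
    (hcons : ∀ n : ℕ, lcontent (seg T n) ⊆ W (p n)) :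
    SemWbSeq p T ↔ SemConvSeq p T :=
  ⟨SemWbSeq.semConvSeq, SemConvSeq.semWbSeq hcons⟩
end

section
/- Semantic restrictions admit total learners: for every interaction operator beta in {G, Psd, Sd} and every semantic learning restriction delta, any class of languages learnable by a partial computable beta-learner under delta is learnable by a total computable beta-learner under delta: [R Txt beta delta] = [Txt beta delta]. -/
open scoped Classical

/-- A learning restriction is semantic if it is invariant under replacing hypotheses
by semantically equivalent ones. -/
def Semantic (δ : (ℕ → ℕ) → Text → Prop) : Prop :=
  ∀ (p p' : ℕ → ℕ) (T : Text), δ p T → (∀ n, W (p n) = W (p' n)) → δ p' T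

/-- A partial Gold-style learner learns `L` under the restriction `δ`. -/
def LearnsG (h : List (Option ℕ) →. ℕ) (δ : (ℕ → ℕ) → Text → Prop) (L : Set ℕ) : Prop :=
  ∀ T : Text, IsTextOf T L → ∃ p : ℕ → ℕ,
    (∀ n, h (seg T n) = Part.some (p n)) ∧ δ p T

/-- A partial partially set-driven learner learns `L` under the restriction `δ`. -/
def LearnsPsd (h : Finset ℕ × ℕ →. ℕ) (δ : (ℕ → ℕ) → Text → Prop) (L : Set ℕ) : Prop :=
  ∀ T : Text, IsTextOf T L → ∃ p : ℕ → ℕ,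
    (∀ n, h (fcontent (seg T n), n) = Part.some (p n)) ∧ δ p T

/-- A partial set-driven learner learns `L` under the restriction `δ`. -/
def LearnsSd (h : Finset ℕ →. ℕ) (δ : (ℕ → ℕ) → Text → Prop) (L : Set ℕ) : Prop :=
  ∀ T : Text, IsTextOf T L → ∃ p : ℕ → ℕ,
    (∀ n, h (fcontent (seg T n)) = Part.some (p n)) ∧ δ p T

/-!
The learner is made total by an s-m-n argument: for a partial computable learner `h`, the
function `a ↦ (index of x ↦ φ_{h a}(x))` is total computable, and whenever `h a` converges its
value is an index of the very same partial function, in particular of the same c.e. set.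
A semantic restriction cannot tell the two hypothesis sequences apart.
-/

open Nat.Partrec (Code)

lemma Partrec.exists_computable_index_eval_eq {α : Type} [Primcodable α] {h : α →. ℕ}
    (hh : Partrec h) :
    ∃ k : α → ℕ, Computable k ∧ ∀ a, ∀ e ∈ h a,
      (Denumerable.ofNat Code (k a)).eval = (Denumerable.ofNat Code e).eval := by
  let g : α × ℕ →. ℕ := fun p => (h p.1).bind fun e => (Denumerable.ofNat Code e).eval p.2
  have hg : Partrec g :=
    (hh.comp Computable.fst).bind
      (Code.eval_part.comp ((Computable.ofNat Code).comp Computable.snd)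
        (Computable.snd.comp Computable.fst))
  obtain ⟨c, hc⟩ := Code.exists_code.1 hg
  refine ⟨fun a => Encodable.encode (c.curry (Encodable.encode a)),
    (Primrec.encode.comp
      (Code.primrec₂_curry.comp (Primrec.const c) Primrec.encode)).to_comp, ?_⟩
  intro a e he
  funext x
  have hpair : Nat.pair (Encodable.encode a) x = Encodable.encode (a, x) := by
    simp [Encodable.encode_prod_val]
  rw [Denumerable.ofNat_encode, Code.eval_curry, hpair, congrFun hc]
  simp only [Encodable.encodek, Part.coe_some, Part.bind_some, g, Part.eq_some_iff.mpr he]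
  exact Part.map_id' Encodable.encode_nat _

/-- `LearnsG`, `LearnsPsd` and `LearnsSd` are the instances `input = seg`, `(fcontent ∘ seg, n)`
and `fcontent ∘ seg` of this definition. -/
def LearnsAlong {α : Type} (input : Text → ℕ → α) (h : α →. ℕ)
    (δ : (ℕ → ℕ) → Text → Prop) (L : Set ℕ) : Prop :=
  ∀ T : Text, IsTextOf T L → ∃ p : ℕ → ℕ,
    (∀ n, h (input T n) = Part.some (p n)) ∧ δ p T

theorem exists_computable_learnsAlong {α : Type} [Primcodable α] (input : Text → ℕ → α)
    {δ : (ℕ → ℕ) → Text → Prop} (hδ : Semantic δ) {𝓛 : Set (Set ℕ)} {h : α →. ℕ}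
    (hh : Partrec h) (hl : ∀ L ∈ 𝓛, LearnsAlong input h δ L) :
    ∃ k : α → ℕ, Computable k ∧ ∀ L ∈ 𝓛, LearnsAlong input (fun a => Part.some (k a)) δ L := by
  obtain ⟨k, hk, hk_eval⟩ := hh.exists_computable_index_eval_eq
  refine ⟨k, hk, fun L hL T hT => ?_⟩
  obtain ⟨p, hp, hδp⟩ := hl L hL T hT
  refine ⟨fun n => k (input T n), fun n => rfl, hδ p _ T hδp fun n => ?_⟩
  have he : p n ∈ h (input T n) := Part.eq_some_iff.mp (hp n)
  simp only [W, hk_eval _ _ he]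

/-- Semantic restrictions admit total learners: `[RTxtβδ] = [Txtβδ]` for
`β ∈ {G, Psd, Sd}`. -/
theorem semantic_restrictions_admit_total_learners
    (δ : (ℕ → ℕ) → Text → Prop) (hδ : Semantic δ) (𝓛 : Set (Set ℕ)) :
    ((∃ h : List (Option ℕ) →. ℕ, Partrec h ∧ ∀ L ∈ 𝓛, LearnsG h δ L) →
      ∃ h : List (Option ℕ) → ℕ, Computable h ∧
        ∀ L ∈ 𝓛, LearnsG (fun σ => Part.some (h σ)) δ L) ∧
    ((∃ h : Finset ℕ × ℕ →. ℕ, Partrec h ∧ ∀ L ∈ 𝓛, LearnsPsd h δ L) →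
      ∃ h : Finset ℕ × ℕ → ℕ, Computable h ∧
        ∀ L ∈ 𝓛, LearnsPsd (fun x => Part.some (h x)) δ L) ∧
    ((∃ h : Finset ℕ →. ℕ, Partrec h ∧ ∀ L ∈ 𝓛, LearnsSd h δ L) →
      ∃ h : Finset ℕ → ℕ, Computable h ∧
        ∀ L ∈ 𝓛, LearnsSd (fun D => Part.some (h D)) δ L) := by
  refine ⟨?_, ?_, ?_⟩ <;> rintro ⟨h, hh, hl⟩
  · exact exists_computable_learnsAlong seg hδ hh hl
  · exact exists_computable_learnsAlong (fun T n => (fcontent (seg T n), n)) hδ hh hl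
  · exact exists_computable_learnsAlong (fun T n => fcontent (seg T n)) hδ hh hl
end

section
/- In the witness-based Sd construction: let h be a syntactically decisive set-driven Ex-learner and define p by W_{p(D)} = D union the union over t of: (W_{h(D)}^t restricted to elements > max(D)) enumerated only while D subseteq W_{h(D)}^t and no set D' with D subseteq D' subseteq W_{h(D)}^t causes h to be undefined or to make a mind change within t steps. Then for every language L that h Ex-learns and every locking set D0 of h on L with no elements of L\D0 below max(D0), and every D with D0 subseteq D subseteq L, we have W_{p(D0')} = L where D0' is the minimal prefix (in ascending order) of D on which h makes no further mind change up to D. -/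
/-!
Write `E = D[k_D]`. As `D0` is an initial segment of `D`, we have `D[|D0|] = D0`, on which `h` is
locked, so `k_D ≤ |D0|`: thus `E ⊆ D0` and `h E = h D0`. Syntactic decisiveness makes `E` itself a
locking set of `h` on `L`: for `E ⊆ D' ⊆ L`, `h` is back at `h D0` on `D' ∪ D0`, so it cannot
have left `h E` on `D'`. For a locking set `E`, every stage at which `W_{h E}` has enumerated `E`
is good, because all sets between `E` and `W_{h E}^t` lie inside `L`. Hence `p(E)` enumerates all
of `W_{h E} = L` above `max E`, and nothing of `L` lies below `max E` outside `E`.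
-/

open scoped Classical

/-- `Wstep e t`: the finite set enumerated by index `e` within `t` steps. -/
def Wstep (e t : ℕ) : Finset ℕ :=
  (Finset.range t).filter
    (fun x => (Nat.Partrec.Code.evaln t (Denumerable.ofNat Nat.Partrec.Code e) x).isSome)

/-- Set-driven explanatory learning of `L`. -/
def SdEx (h : Finset ℕ → ℕ) (L : Set ℕ) : Prop :=
  ∀ T : Text, IsTextOf T L → ∃ n0 : ℕ,
    (∀ n ≥ n0, h (fcontent (seg T n)) = h (fcontent (seg T n0))) ∧
    W (h (fcontent (seg T n0))) = L

/-- `D0` is a locking set of `h` on `L`. -/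
def LockingSet (h : Finset ℕ → ℕ) (L : Set ℕ) (D0 : Finset ℕ) : Prop :=
  ↑D0 ⊆ L ∧ ∀ D' : Finset ℕ, D0 ⊆ D' → ↑D' ⊆ L → h D' = h D0 ∧ W (h D') = L

/-- The stage `t` is "good" for `D`: `D` is already enumerated, and no superset of
`D` inside the enumerated part causes `h` to make a mind change. -/
def goodStage (h : Finset ℕ → ℕ) (D : Finset ℕ) (t : ℕ) : Prop :=
  ↑D ⊆ (Wstep (h D) t : Set ℕ) ∧
  ∀ D' : Finset ℕ, D ⊆ D' → D' ⊆ Wstep (h D) t → h D' = h D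

/-- The set `W_{p(D)}`: `D` together with the elements above `max D` enumerated by
`h D` at good stages. -/
def pSet (h : Finset ℕ → ℕ) (D : Finset ℕ) : Set ℕ :=
  ↑D ∪ {x | ∃ t : ℕ, goodStage h D t ∧ x ∈ Wstep (h D) t ∧ ∀ y ∈ D, y < x}

/-- The set of the `k` smallest elements of `D`. -/
def takeSmall (D : Finset ℕ) (k : ℕ) : Finset ℕ :=
  ((D.sort (· ≤ ·)).take k).toFinset

/-- `k_D`: the least `k` such that `h` makes no mind change between `D[k]` and `D`. -/
noncomputable def kMin (h : Finset ℕ → ℕ) (D : Finset ℕ) : ℕ :=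
  sInf {k : ℕ | ∀ D' : Finset ℕ, takeSmall D k ⊆ D' → D' ⊆ D → h D' = h D}

def IsInitialIn (S : Finset ℕ) (L : Set ℕ) : Prop :=
  ∀ x ∈ L, x ∉ S → ∀ y ∈ S, y < x

lemma IsInitialIn.mono {S : Finset ℕ} {L L' : Set ℕ} (h : IsInitialIn S L) (hL : L' ⊆ L) :
    IsInitialIn S L' :=
  fun x hx => h x (hL hx)

lemma IsInitialIn.trans {S T : Finset ℕ} {L : Set ℕ} (hST : IsInitialIn S T)
    (hTL : IsInitialIn T L) (hS : S ⊆ T) : IsInitialIn S L := by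
  intro x hx hxS y hy
  by_cases hxT : x ∈ T
  · exact hST x hxT hxS y hy
  · exact hTL x hx hxT y (hS hy)

lemma Wstep_mono (e : ℕ) : Monotone (Wstep e) := by
  intro t t' htt x hx
  simp only [Wstep, Finset.mem_filter, Finset.mem_range, Option.isSome_iff_exists] at hx ⊢
  obtain ⟨hlt, v, hv⟩ := hx
  exact ⟨hlt.trans_le htt, v, Nat.Partrec.Code.evaln_mono htt hv⟩

lemma W_eq_iUnion_Wstep (e : ℕ) : W e = ⋃ t, (Wstep e t : Set ℕ) := by
  ext x
  simp only [W, Wstep, Set.mem_ofPred_eq, Set.mem_iUnion, Finset.coe_filter, Finset.mem_range,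
    Option.isSome_iff_exists, Part.dom_iff_mem, Nat.Partrec.Code.evaln_complete]
  constructor
  · rintro ⟨v, t, hv⟩
    exact ⟨t, Nat.Partrec.Code.evaln_bound hv, v, hv⟩
  · rintro ⟨t, -, v, hv⟩
    exact ⟨v, t, hv⟩

lemma exists_subset_Wstep {e : ℕ} {S : Finset ℕ} (hS : ↑S ⊆ W e) : ∃ t, S ⊆ Wstep e t := by
  rw [W_eq_iUnion_Wstep] at hS
  have hmono : Monotone fun t => (Wstep e t : Set ℕ) :=
    fun _ _ htt => Finset.coe_subset.mpr (Wstep_mono e htt)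
  obtain ⟨t, ht⟩ := hmono.directed_le.exists_mem_subset_of_finset_subset_biUnion hS
  exact ⟨t, Finset.coe_subset.mp ht⟩

lemma takeSmall_subset (D : Finset ℕ) (k : ℕ) : takeSmall D k ⊆ D := by
  intro x hx
  simp only [takeSmall, List.mem_toFinset] at hx
  exact (Finset.mem_sort _).mp (List.mem_of_mem_take hx)

lemma takeSmall_mono (D : Finset ℕ) : Monotone (takeSmall D) := by
  intro k k' hk x hx
  simp only [takeSmall, List.mem_toFinset] at hx ⊢
  rw [← min_eq_left hk, ← List.take_take] at hx
  exact List.mem_of_mem_take hx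

lemma isInitialIn_takeSmall (D : Finset ℕ) (k : ℕ) : IsInitialIn (takeSmall D k) D := by
  intro x hxD hx y hy
  have hsorted := (Finset.sortedLT_sort D).pairwise
  rw [← List.take_append_drop k (D.sort (· ≤ ·))] at hsorted
  have hxdrop : x ∈ (D.sort (· ≤ ·)).drop k := by
    have hxsort : x ∈ D.sort (· ≤ ·) := (Finset.mem_sort _).mpr hxD
    rw [← List.take_append_drop k (D.sort (· ≤ ·)), List.mem_append] at hxsort
    exact hxsort.resolve_left fun hxtake => hx (List.mem_toFinset.mpr hxtake)
  exact (List.pairwise_append.mp hsorted).2.2 y (List.mem_toFinset.mp hy) x hxdrop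

lemma takeSmall_card_of_isInitialIn {D D0 : Finset ℕ} (hsub : D0 ⊆ D)
    (hinit : IsInitialIn D0 D) : takeSmall D D0.card = D0 := by
  have hsplit : D.sort (· ≤ ·) = D0.sort (· ≤ ·) ++ (D \ D0).sort (· ≤ ·) := by
    refine List.Pairwise.eq_of_mem_iff (Finset.sortedLT_sort D).pairwise ?_ fun a => ?_
    · refine List.pairwise_append.mpr ⟨(Finset.sortedLT_sort D0).pairwise,
        (Finset.sortedLT_sort _).pairwise, fun y hy x hx => ?_⟩
      obtain ⟨hxD, hxD0⟩ := Finset.mem_sdiff.mp ((Finset.mem_sort _).mp hx)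
      exact hinit x hxD hxD0 y ((Finset.mem_sort _).mp hy)
    · simp only [List.mem_append, Finset.mem_sort, Finset.mem_sdiff]
      by_cases ha : a ∈ D0
      · simp [ha, hsub ha]
      · simp [ha]
  rw [takeSmall, hsplit, ← Finset.length_sort (· ≤ ·) (s := D0), List.take_left,
    Finset.sort_toFinset]

lemma apply_takeSmall_kMin (h : Finset ℕ → ℕ) (D : Finset ℕ) :
    h (takeSmall D (kMin h D)) = h D := by
  have hcard : D.card ∈ {k | ∀ D' : Finset ℕ, takeSmall D k ⊆ D' → D' ⊆ D → h D' = h D} := by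
    intro D' hD' hD'D
    have hD : takeSmall D D.card = D :=
      takeSmall_card_of_isInitialIn subset_rfl fun _ hx hx' => absurd hx hx'
    rw [hD] at hD'
    rw [subset_antisymm hD'D hD']
  exact Nat.sInf_mem ⟨D.card, hcard⟩ _ subset_rfl (takeSmall_subset D _)

lemma kMin_le {h : Finset ℕ → ℕ} {D : Finset ℕ} {k : ℕ}
    (hk : ∀ D' : Finset ℕ, takeSmall D k ⊆ D' → D' ⊆ D → h D' = h D) : kMin h D ≤ k :=
  Nat.sInf_le hk

section Locking

variable {h : Finset ℕ → ℕ} {L : Set ℕ}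

lemma LockingSet.of_subset
    (hdec : ∀ D1 D2 D3 : Finset ℕ, D1 ⊆ D2 → D2 ⊆ D3 → h D1 = h D3 → h D1 = h D2)
    {D0 E : Finset ℕ} (hD0 : LockingSet h L D0) (hE : E ⊆ D0) (hhE : h E = h D0) :
    LockingSet h L E := by
  obtain ⟨hD0L, hlock⟩ := hD0
  refine ⟨(Finset.coe_subset.mpr hE).trans hD0L, fun D' hED' hD'L => ?_⟩
  obtain ⟨hunion, hWunion⟩ :=
    hlock (D' ∪ D0) Finset.subset_union_right (by simpa using ⟨hD'L, hD0L⟩)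
  have hhD' : h E = h D' :=
    hdec E D' (D' ∪ D0) hED' Finset.subset_union_left (hhE.trans hunion.symm)
  exact ⟨hhD'.symm, by rw [← hhD', hhE, ← hunion, hWunion]⟩

lemma pSet_eq_of_lockingSet {E : Finset ℕ} (hE : LockingSet h L E) (hinit : IsInitialIn E L) :
    pSet h E = L := by
  obtain ⟨hEL, hlock⟩ := hE
  have hWE : W (h E) = L := (hlock E subset_rfl hEL).2
  have hWstepL : ∀ t, (Wstep (h E) t : Set ℕ) ⊆ L := fun t => by
    rw [← hWE, W_eq_iUnion_Wstep]
    exact Set.subset_iUnion (fun t => (Wstep (h E) t : Set ℕ)) t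
  refine Set.Subset.antisymm (Set.union_subset hEL fun x ⟨t, _, hxt, _⟩ => hWstepL t hxt) ?_
  intro x hxL
  by_cases hxE : x ∈ E
  · exact Or.inl hxE
  obtain ⟨t, ht⟩ := exists_subset_Wstep (e := h E) (S := insert x E) (by
    rw [hWE, Finset.coe_insert]
    exact Set.insert_subset hxL hEL)
  refine Or.inr ⟨t, ⟨?_, fun D' hED' hD'W => ?_⟩, ht (Finset.mem_insert_self x E),
    hinit x hxL hxE⟩
  · exact Finset.coe_subset.mpr ((Finset.subset_insert x E).trans ht)
  · exact (hlock D' hED' ((Finset.coe_subset.mpr hD'W).trans (hWstepL t))).1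

end Locking

theorem witness_based_sd_construction_correct_general
    (h : Finset ℕ → ℕ) (p : Finset ℕ → ℕ)
    (hp : ∀ D : Finset ℕ, W (p D) = pSet h D)
    (hdec : ∀ D1 D2 D3 : Finset ℕ, D1 ⊆ D2 → D2 ⊆ D3 → h D1 = h D3 → h D1 = h D2)
    (L : Set ℕ)
    (D0 : Finset ℕ) (hD0 : LockingSet h L D0)
    (hmin : ∀ x ∈ L, x ∉ D0 → ∀ y ∈ D0, y < x) :
    ∀ D : Finset ℕ, D0 ⊆ D → ↑D ⊆ L → W (p (takeSmall D (kMin h D))) = L := by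
  intro D hD0D hDL
  have hD0init : IsInitialIn D0 L := hmin
  have htake : takeSmall D D0.card = D0 :=
    takeSmall_card_of_isInitialIn hD0D (hD0init.mono hDL)
  have hhD : h D = h D0 := (hD0.2 D hD0D hDL).1
  have hk : kMin h D ≤ D0.card := kMin_le fun D' hD' hD'D => by
    rw [htake] at hD'
    rw [(hD0.2 D' hD' ((Finset.coe_subset.mpr hD'D).trans hDL)).1, hhD]
  set E := takeSmall D (kMin h D)
  have hED0 : E ⊆ D0 := htake ▸ takeSmall_mono D hk
  have hEinit : IsInitialIn E L :=
    ((isInitialIn_takeSmall D _).mono (Finset.coe_subset.mpr hD0D)).trans hD0init hED0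
  have hE : LockingSet h L E := hD0.of_subset hdec hED0 ((apply_takeSmall_kMin h D).trans hhD)
  rw [hp, pSet_eq_of_lockingSet hE hEinit]

/-- Correctness of the poisoned hypotheses in the witness-based Sd-construction:
above a suitable locking set, the hypothesis `p(D[k_D])` enumerates exactly `L`. -/
theorem witness_based_sd_construction_correct
    (h : Finset ℕ → ℕ) (p : Finset ℕ → ℕ)
    (hp : ∀ D : Finset ℕ, W (p D) = pSet h D)
    (hdec : ∀ D1 D2 D3 : Finset ℕ, D1 ⊆ D2 → D2 ⊆ D3 → h D1 = h D3 → h D1 = h D2)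
    (L : Set ℕ) (hlearn : SdEx h L)
    (D0 : Finset ℕ) (hD0 : LockingSet h L D0)
    (hmin : ∀ x ∈ L, x ∉ D0 → ∀ y ∈ D0, y < x) :
    ∀ D : Finset ℕ, D0 ⊆ D → ↑D ⊆ L → W (p (takeSmall D (kMin h D))) = L :=
  witness_based_sd_construction_correct_general h p hp hdec L D0 hD0 hmin
end

section
/- Every Blum-Blum locking argument for set-driven learners: if a set-driven learner h Ex-learns an infinite language L, then there exists a finite locking set D0 subseteq L for h on L, i.e., for all finite D' with D0 subseteq D' subseteq L, h(D') = h(D0) and W_{h(D0)} = L. -/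
open scoped Classical

/-! If no finite `D₀ ⊆ L` were a locking set, then from every finite `D ⊆ L` on which `h` is
correct one could escape, inside `L`, to a finite superset on which `h` changes its guess.
Alternating such escapes with adding the next element of `L` yields an increasing chain of
finite sets exhausting `L`. Listing the chain block by block is a text for `L`, so `h` must
converge along the chain to a correct index, while it changes its guess at every escape. -/

section PrefixLimit

variable {α : Type*}

/-- The sequence whose initial segments are the lists `P n`; the padding `d` is never read
when each `P n` is a prefix of `P (n + 1)` and `n ≤ (P n).length`. -/
def prefixLimit (P : ℕ → List α) (d : α) (i : ℕ) : α := (P (i + 1)).getD i d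

variable {P : ℕ → List α}

theorem isPrefix_of_le (hstep : ∀ n, P n <+: P (n + 1)) {m n : ℕ} (hmn : m ≤ n) :
    P m <+: P n := by
  induction hmn with
  | refl => exact List.prefix_rfl
  | step _ ih => exact ih.trans (hstep _)

theorem prefixLimit_eq_getElem (d : α) (hstep : ∀ n, P n <+: P (n + 1))
    (hlen : ∀ n, n ≤ (P n).length) {m i : ℕ} (hi : i < (P m).length) :
    prefixLimit P d i = (P m)[i] := by
  have hi' : i < (P (i + 1)).length := Nat.lt_of_lt_of_le i.lt_succ_self (hlen _)
  rw [prefixLimit, List.getD_eq_getElem _ _ hi']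
  rcases le_total (i + 1) m with hle | hle
  · exact (isPrefix_of_le hstep hle).getElem hi'
  · exact ((isPrefix_of_le hstep hle).getElem hi).symm

theorem map_range_prefixLimit (d : α) (hstep : ∀ n, P n <+: P (n + 1))
    (hlen : ∀ n, n ≤ (P n).length) (m : ℕ) :
    (List.range (P m).length).map (prefixLimit P d) = P m :=
  List.ext_getElem (by simp) fun i _ hi => by
    simp [prefixLimit_eq_getElem d hstep hlen hi]

theorem mem_range_prefixLimit (d : α) (hstep : ∀ n, P n <+: P (n + 1))
    (hlen : ∀ n, n ≤ (P n).length) {a : α} :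
    a ∈ Set.range (prefixLimit P d) ↔ ∃ n, a ∈ P n := by
  constructor
  · rintro ⟨i, rfl⟩
    have hi : i < (P (i + 1)).length := Nat.lt_of_lt_of_le i.lt_succ_self (hlen _)
    exact ⟨i + 1, prefixLimit_eq_getElem d hstep hlen hi ▸ List.getElem_mem hi⟩
  · rintro ⟨n, hn⟩
    obtain ⟨i, hi, rfl⟩ := List.getElem_of_mem hn
    exact ⟨i, prefixLimit_eq_getElem d hstep hlen hi⟩

end PrefixLimit

theorem mem_fcontent {x : ℕ} {σ : List (Option ℕ)} : x ∈ fcontent σ ↔ some x ∈ σ := by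
  simp [fcontent]

section ChainText

variable {F : ℕ → Finset ℕ}

/-- The blocks `# :: F k` for `k < n`; the pauses keep the text total when blocks are empty. -/
noncomputable def chainPrefix (F : ℕ → Finset ℕ) : ℕ → List (Option ℕ)
  | 0 => []
  | n + 1 => chainPrefix F n ++ none :: (F n).toList.map some

noncomputable def chainText (F : ℕ → Finset ℕ) : Text := prefixLimit (chainPrefix F) none

theorem chainPrefix_isPrefix_succ (n : ℕ) : chainPrefix F n <+: chainPrefix F (n + 1) :=
  List.prefix_append _ _

theorem le_length_chainPrefix (n : ℕ) : n ≤ (chainPrefix F n).length := by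
  induction n with
  | zero => simp
  | succ n ih => simp [chainPrefix]; omega

theorem some_mem_chainPrefix {x n : ℕ} : some x ∈ chainPrefix F n ↔ ∃ k < n, x ∈ F k := by
  induction n with
  | zero => simp [chainPrefix]
  | succ n ih =>
    simp [chainPrefix, ih, Nat.le_iff_lt_or_eq, or_and_right, exists_or]

theorem fcontent_chainPrefix_succ (hF : Monotone F) (n : ℕ) :
    fcontent (chainPrefix F (n + 1)) = F n := by
  ext x
  rw [mem_fcontent, some_mem_chainPrefix]
  exact ⟨fun ⟨k, hk, hx⟩ => hF (Nat.lt_succ_iff.mp hk) hx, fun hx => ⟨n, n.lt_succ_self, hx⟩⟩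

theorem seg_chainText (n : ℕ) : seg (chainText F) (chainPrefix F n).length = chainPrefix F n :=
  map_range_prefixLimit none chainPrefix_isPrefix_succ le_length_chainPrefix n

theorem content_chainText : content (chainText F) = ⋃ k, (F k : Set ℕ) := by
  ext x
  change some x ∈ Set.range (chainText F) ↔ _
  rw [chainText, mem_range_prefixLimit none chainPrefix_isPrefix_succ le_length_chainPrefix]
  simp only [some_mem_chainPrefix, Set.mem_iUnion, Finset.mem_coe]
  exact ⟨fun ⟨_, k, _, hx⟩ => ⟨k, hx⟩, fun ⟨k, hx⟩ => ⟨k + 1, k, k.lt_succ_self, hx⟩⟩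

end ChainText

theorem SdEx.eventually_eq_of_monotone {h : Finset ℕ → ℕ} {L : Set ℕ} (hlearn : SdEx h L)
    {F : ℕ → Finset ℕ} (hF : Monotone F) (hFL : ⋃ k, (F k : Set ℕ) = L) :
    ∃ e, W e = L ∧ ∀ᶠ k in Filter.atTop, h (F k) = e := by
  obtain ⟨n₀, hconv, hW⟩ := hlearn (chainText F) (content_chainText.trans hFL)
  refine ⟨_, hW, Filter.eventually_atTop.mpr ⟨n₀, fun k hk => ?_⟩⟩
  have hlen : n₀ ≤ (chainPrefix F (k + 1)).length :=
    (hk.trans k.le_succ).trans (le_length_chainPrefix _)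
  simpa only [seg_chainText, fcontent_chainPrefix_succ hF] using hconv _ hlen

section EscapeChain

variable {g : Finset ℕ → Finset ℕ} {L : Set ℕ}

/-- `E (2k+1) = g (E (2k))`, and `E (2k+2)` adds `k` to `E (2k+1)` if `k ∈ L`. -/
noncomputable def escapeChain (g : Finset ℕ → Finset ℕ) (L : Set ℕ) : ℕ → Finset ℕ
  | 0 => ∅
  | n + 1 =>
    if Even n then g (escapeChain g L n)
    else if n / 2 ∈ L then insert (n / 2) (escapeChain g L n) else escapeChain g L n

theorem escapeChain_even_succ (k : ℕ) :
    escapeChain g L (2 * k + 1) = g (escapeChain g L (2 * k)) := by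
  simp [escapeChain]

theorem monotone_escapeChain (hg : ∀ D, D ⊆ g D) : Monotone (escapeChain g L) := by
  refine monotone_nat_of_le_succ fun n => ?_
  simp only [escapeChain]
  split_ifs
  exacts [hg _, Finset.subset_insert _ _, le_rfl]

theorem coe_escapeChain_subset (hg : ∀ D : Finset ℕ, ↑D ⊆ L → ↑(g D) ⊆ L) (n : ℕ) :
    ↑(escapeChain g L n) ⊆ L := by
  induction n with
  | zero => simp [escapeChain]
  | succ n ih =>
    simp only [escapeChain]
    split_ifs with _ hn
    exacts [hg _ ih, by simpa using Set.insert_subset hn ih, ih]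

theorem mem_escapeChain {x : ℕ} (hx : x ∈ L) : x ∈ escapeChain g L (2 * x + 2) := by
  have hodd : ¬Even (2 * x + 1) := Nat.not_even_iff_odd.mpr (odd_two_mul_add_one x)
  have hdiv : (2 * x + 1) / 2 = x := by omega
  simp [escapeChain, hodd, hdiv, hx]

theorem iUnion_escapeChain (hg : ∀ D : Finset ℕ, ↑D ⊆ L → ↑(g D) ⊆ L) :
    ⋃ n, (escapeChain g L n : Set ℕ) = L :=
  (Set.iUnion_subset (coe_escapeChain_subset hg)).antisymm fun _ hx =>
    Set.mem_iUnion.mpr ⟨_, mem_escapeChain hx⟩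

end EscapeChain

theorem exists_escape {h : Finset ℕ → ℕ} {L : Set ℕ}
    (hno : ∀ D : Finset ℕ, ↑D ⊆ L → W (h D) = L → ∃ D', D ⊆ D' ∧ ↑D' ⊆ L ∧ h D' ≠ h D) :
    ∃ g : Finset ℕ → Finset ℕ, ∀ D, D ⊆ g D ∧ (↑D ⊆ L → ↑(g D) ⊆ L) ∧
      (↑D ⊆ L → W (h D) = L → h (g D) ≠ h D) := by
  refine ⟨fun D => if hD : ↑D ⊆ L ∧ W (h D) = L then (hno D hD.1 hD.2).choose else D, ?_⟩
  intro D
  by_cases hD : ↑D ⊆ L ∧ W (h D) = L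
  · obtain ⟨hsup, hsub, hne⟩ := (hno D hD.1 hD.2).choose_spec
    simp only [dif_pos hD]
    exact ⟨hsup, fun _ => hsub, fun _ _ => hne⟩
  · simp only [dif_neg hD]
    exact ⟨le_rfl, id, fun hDL hW => absurd ⟨hDL, hW⟩ hD⟩

theorem sd_locking_set_exists_general (h : Finset ℕ → ℕ) (L : Set ℕ)
    (hlearn : SdEx h L) :
    ∃ D0 : Finset ℕ, ↑D0 ⊆ L ∧ W (h D0) = L ∧
      ∀ D' : Finset ℕ, D0 ⊆ D' → ↑D' ⊆ L → h D' = h D0 := by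
  by_contra hno
  push Not at hno
  obtain ⟨g, hg⟩ := exists_escape hno
  set E := escapeChain g L
  have hEL : ∀ n, ↑(E n) ⊆ L := coe_escapeChain_subset fun D => (hg D).2.1
  obtain ⟨e, hW, hconv⟩ := hlearn.eventually_eq_of_monotone
    (monotone_escapeChain fun D => (hg D).1) (iUnion_escapeChain fun D => (hg D).2.1)
  obtain ⟨k, hk⟩ := Filter.eventually_atTop.mp hconv
  have hstay : h (E (2 * k)) = e := hk _ (by omega)
  have hmove : h (g (E (2 * k))) = e :=
    escapeChain_even_succ (g := g) (L := L) k ▸ hk _ (by omega)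
  exact (hg _).2.2 (hEL _) (hstay ▸ hW) (hmove.trans hstay.symm)

/-- Blum–Blum locking sets for set-driven learners: a set-driven learner Ex-learning
an infinite language has a finite locking set for it. -/
theorem sd_locking_set_exists (h : Finset ℕ → ℕ) (L : Set ℕ)
    (hinf : L.Infinite) (hlearn : SdEx h L) :
    ∃ D0 : Finset ℕ, ↑D0 ⊆ L ∧ W (h D0) = L ∧
      ∀ D' : Finset ℕ, D0 ⊆ D' → ↑D' ⊆ L → h D' = h D0 :=
  sd_locking_set_exists_general h L hlearn
end
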